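/- Let d ≥ 1 and γ ∈ Γ_d. If γ ∈ A_d but γ ∉ ⟨a_d⟩, then the centralizer of γ in Γ_d equals A_d. If γ ∈ ⟨a_d⟩, then the centralizer of γ in Γ_d is all of Γ_d. -/

import Mathlib

namespace ModelFiliform

/-- The "down-shift" endomorphism `N` of `ℤ^d`: `(N x) j = x (j-1)` for `j ≥ 1`, `(N x) 0 = 0`.
The automorphism `φ` of the model filiform group is `1 + N`. -/
def shiftMap (d : ℕ) : (Fin d → ℤ) →ₗ[ℤ] (Fin d → ℤ) where
  toFun x := fun j =>
    if _h : 1 ≤ (j : ℕ) then x ⟨(j : ℕ) - 1, lt_of_le_of_lt (Nat.sub_le _ _) j.isLt⟩ else 0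
  map_add' x y := by funext j; by_cases h : 1 ≤ (j : ℕ) <;> simp [h]
  map_smul' c x := by funext j; by_cases h : 1 ≤ (j : ℕ) <;> simp [h]

theorem shiftMap_apply (d : ℕ) (x : Fin d → ℤ) (j : Fin d) :
    shiftMap d x j =
      if _h : 1 ≤ (j : ℕ) then x ⟨(j : ℕ) - 1, lt_of_le_of_lt (Nat.sub_le _ _) j.isLt⟩ else 0 :=
  rfl

theorem shiftMap_pow_apply (d k : ℕ) (x : Fin d → ℤ) (j : Fin d) :
    ((shiftMap d ^ k) x) j =
      if _h : k ≤ (j : ℕ) then x ⟨(j : ℕ) - k, lt_of_le_of_lt (Nat.sub_le _ _) j.isLt⟩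
      else 0 := by
  induction k generalizing x with
  | zero => simp
  | succ k ih =>
      rw [pow_succ, Module.End.mul_apply, ih]
      by_cases h1 : k ≤ (j : ℕ)
      · rw [dif_pos h1, shiftMap_apply]
        by_cases h2 : k + 1 ≤ (j : ℕ)
        · rw [dif_pos (show 1 ≤ (j : ℕ) - k by omega), dif_pos h2]
          have hab : (j : ℕ) - k - 1 = (j : ℕ) - (k + 1) := by omega
          simp only [hab]
        · rw [dif_neg (show ¬ 1 ≤ (j : ℕ) - k by omega), dif_neg h2]
      · rw [dif_neg h1, dif_neg (by omega)]

theorem shiftMap_nilpotent (d : ℕ) : IsNilpotent (shiftMap d) := by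
  refine ⟨d, ?_⟩
  apply LinearMap.ext
  intro x
  funext j
  rw [shiftMap_pow_apply, dif_neg (by omega)]
  rfl

/-- `φ = 1 + N` as a unit of the endomorphism ring of `ℤ^d`. -/
noncomputable def phiUnit (d : ℕ) : (Module.End ℤ (Fin d → ℤ))ˣ :=
  ((shiftMap_nilpotent d).isUnit_one_add).unit

/-- The automorphism `φ` of `ℤ^d`: writing `ℤ^d` multiplicatively with basis `a_1, …, a_d`
(where `a_{i+1}` is the `i`-th standard basis vector, `i : Fin d`), it fixes `a_d` and sends
`a_i ↦ a_i a_{i+1}` for `1 ≤ i < d`. -/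
noncomputable def phi (d : ℕ) : (Fin d → ℤ) ≃ₗ[ℤ] (Fin d → ℤ) :=
  LinearMap.GeneralLinearGroup.generalLinearEquiv ℤ _ (phiUnit d)

/-- `φ` as a multiplicative automorphism of `Multiplicative ℤ^d`. -/
noncomputable def phiAut (d : ℕ) : MulAut (Multiplicative (Fin d → ℤ)) :=
  AddEquiv.toMultiplicative (phi d).toAddEquiv

/-- The action of `ℤ` on `ℤ^d` defining `Γ_d = ℤ^d ⋊_φ ℤ`: the generator `t` acts by
`t x t⁻¹ = φ⁻¹(x)`, so that `t⁻¹ a_i t = φ(a_i)`, i.e. `t⁻¹ a_i t = a_i a_{i+1}` for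
`1 ≤ i < d` and `t⁻¹ a_d t = a_d`. -/
noncomputable def act (d : ℕ) : Multiplicative ℤ →* MulAut (Multiplicative (Fin d → ℤ)) :=
  zpowersHom _ (phiAut d)⁻¹

/-- The discrete model filiform group `Γ_d = ℤ^d ⋊_φ ℤ`. -/
abbrev Gamma (d : ℕ) : Type :=
  SemidirectProduct (Multiplicative (Fin d → ℤ)) (Multiplicative ℤ) (act d)

/-- The generator `t` of `Γ_d`. -/
noncomputable def tGen (d : ℕ) : Gamma d :=
  SemidirectProduct.inr (Multiplicative.ofAdd (1 : ℤ))

/-- The generators `a_1, …, a_d` of `Γ_d`: here `aGen d i` is `a_{i+1}` (as `i : Fin d` is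
0-indexed), so `a_1 = aGen d ⟨0, _⟩` and `a_d = aGen d ⟨d-1, _⟩`. -/
noncomputable def aGen (d : ℕ) (i : Fin d) : Gamma d :=
  SemidirectProduct.inl (Multiplicative.ofAdd (Pi.single i (1 : ℤ)))

/-- The standard generating set `{a_1, …, a_d, t}` of `Γ_d`. -/
noncomputable def gens (d : ℕ) : Set (Gamma d) := insert (tGen d) (Set.range (aGen d))

/-- The word length `d(1,g)` of `g ∈ Γ_d` with respect to the standard generators: the least
`n` such that `g` is a product of `n` elements of `{a_1^{±1}, …, a_d^{±1}, t^{±1}}`. -/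
noncomputable def wl (d : ℕ) (g : Gamma d) : ℕ :=
  sInf {n | ∃ l : List (Gamma d), l.length = n ∧
    (∀ x ∈ l, x ∈ gens d ∨ x⁻¹ ∈ gens d) ∧ l.prod = g}

/-- The subgroup `A_d = ℤ^d ⋊ 1 = ⟨a_1, …, a_d⟩` of `Γ_d`. -/
noncomputable def A (d : ℕ) : Subgroup (Gamma d) := Subgroup.closure (Set.range (aGen d))

/-! ### Auxiliary lemmas -/

open Multiplicative SemidirectProduct

theorem phiAut_toAdd (d : ℕ) (v : Multiplicative (Fin d → ℤ)) :
    toAdd (phiAut d v) = (1 + shiftMap d) (toAdd v) :=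
  DFunLike.congr_fun ((shiftMap_nilpotent d).isUnit_one_add.unit_spec) (toAdd v)

theorem phiAut_pow_toAdd (d m : ℕ) (v : Multiplicative (Fin d → ℤ)) :
    toAdd ((phiAut d ^ m) v) = ((1 + shiftMap d) ^ m) (toAdd v) := by
  induction m with
  | zero => simp
  | succ m ih =>
      rw [pow_succ', MulAut.mul_apply, phiAut_toAdd, ih, pow_succ',
        Module.End.mul_apply]

theorem one_add_shift_apply (d : ℕ) (u : Fin d → ℤ) (j : Fin d) :
    ((1 + shiftMap d) u) j =
      u j + if _h : 1 ≤ (j : ℕ) then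
        u ⟨(j : ℕ) - 1, lt_of_le_of_lt (Nat.sub_le _ _) j.isLt⟩ else 0 := by
  simp [LinearMap.add_apply, shiftMap_apply]

theorem pow_coords (d n₀ : ℕ) (h1 : n₀ + 1 < d) (u : Fin d → ℤ)
    (hz : ∀ j : Fin d, (j : ℕ) < n₀ → u j = 0) (m : ℕ) :
    (∀ j : Fin d, (j : ℕ) ≤ n₀ → (((1 + shiftMap d) ^ m) u) j = u j) ∧
      (((1 + shiftMap d) ^ m) u) ⟨n₀ + 1, h1⟩ =
        u ⟨n₀ + 1, h1⟩ + m * u ⟨n₀, by omega⟩ := by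
  induction m with
  | zero => simp
  | succ m ih =>
      obtain ⟨ih1, ih2⟩ := ih
      have hw : ((1 + shiftMap d) ^ (m + 1)) u = (1 + shiftMap d) (((1 + shiftMap d) ^ m) u) := by
        rw [pow_succ', Module.End.mul_apply]
      constructor
      · intro j hj
        rw [hw, one_add_shift_apply]
        by_cases hj1 : 1 ≤ (j : ℕ)
        · rw [dif_pos hj1, ih1 j hj, ih1 ⟨(j : ℕ) - 1, _⟩ (by simp; omega),
            hz ⟨(j : ℕ) - 1, _⟩ (by simp; omega), add_zero]
        · rw [dif_neg hj1, ih1 j hj, add_zero]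
      · rw [hw, one_add_shift_apply, dif_pos (by simp), ih2]
        have : ((⟨n₀ + 1, h1⟩ : Fin d) : ℕ) - 1 = n₀ := by simp
        rw [ih1 ⟨(((⟨n₀ + 1, h1⟩ : Fin d) : ℕ)) - 1, _⟩ (by simp)]
        have he : (⟨((⟨n₀ + 1, h1⟩ : Fin d) : ℕ) - 1,
            lt_of_le_of_lt (Nat.sub_le _ _) (Fin.isLt _)⟩ : Fin d) = ⟨n₀, by omega⟩ := by
          apply Fin.ext; simp
        rw [he]
        push_cast
        ring

theorem pow_fixed_eq_zero (d : ℕ) (u : Fin d → ℤ)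
    (hex : ∃ i : Fin d, (i : ℕ) < d - 1 ∧ u i ≠ 0) (m : ℕ)
    (hm : ((1 + shiftMap d) ^ m) u = u) : m = 0 := by
  by_contra hm0
  obtain ⟨i, hi, hne⟩ := hex
  have hP : ∃ n : ℕ, ∃ h : n < d, u ⟨n, h⟩ ≠ 0 := ⟨i, i.isLt, by simpa using hne⟩
  have hspec := Nat.find_spec hP
  obtain ⟨hn₀d, hn₀⟩ := hspec
  set n₀ := Nat.find hP with hn₀def
  have hn₀le : n₀ ≤ (i : ℕ) := Nat.find_le ⟨i.isLt, by simpa using hne⟩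
  have h1 : n₀ + 1 < d := by omega
  have hz : ∀ j : Fin d, (j : ℕ) < n₀ → u j = 0 := by
    intro j hj
    have := Nat.find_min hP hj
    push_neg at this
    have := this j.isLt
    simpa using this
  have key := (pow_coords d n₀ h1 u hz m).2
  rw [hm] at key
  have : (m : ℤ) * u ⟨n₀, by omega⟩ = 0 := by linarith
  rcases mul_eq_zero.1 this with h | h
  · exact hm0 (by exact_mod_cast h)
  · exact hn₀ h

theorem mulaut_fix_pow {X : Type*} [Group X] (e : MulAut X) (v : X) (h : e v = v) (m : ℕ) :
    (e ^ m) v = v := by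
  induction m with
  | zero => rfl
  | succ m ih => rw [pow_succ', MulAut.mul_apply, ih, h]

theorem mulaut_fix_zpow {X : Type*} [Group X] (e : MulAut X) (v : X) (h : e v = v) (n : ℤ) :
    (e ^ n) v = v := by
  cases n with
  | ofNat m => rw [Int.ofNat_eq_coe, zpow_natCast]; exact mulaut_fix_pow e v h m
  | negSucc m =>
      rw [zpow_negSucc]
      have h2 : (e ^ (m + 1)) v = v := mulaut_fix_pow e v h (m + 1)
      rw [MulAut.inv_def, MulEquiv.symm_apply_eq, h2]

theorem mulaut_zpow_fix_neg {X : Type*} [Group X] (e : MulAut X) (v : X) (n : ℤ)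
    (h : (e ^ n) v = v) : (e ^ (-n)) v = v := by
  rw [zpow_neg, MulAut.inv_def, MulEquiv.symm_apply_eq, h]

theorem zpow_fixed_eq_zero (d : ℕ) (v : Multiplicative (Fin d → ℤ))
    (hex : ∃ i : Fin d, (i : ℕ) < d - 1 ∧ toAdd v i ≠ 0) (n : ℤ)
    (h : (phiAut d ^ n) v = v) : n = 0 := by
  have key : ∀ m : ℕ, (phiAut d ^ (m : ℤ)) v = v → m = 0 := by
    intro m hm
    rw [zpow_natCast] at hm
    have := congrArg toAdd hm
    rw [phiAut_pow_toAdd] at this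
    exact pow_fixed_eq_zero d (toAdd v) hex m this
  rcases le_or_gt 0 n with hn | hn
  · have := key n.toNat (by rwa [Int.toNat_of_nonneg hn])
    omega
  · have h2 := mulaut_zpow_fix_neg _ _ _ h
    have := key (-n).toNat (by rwa [Int.toNat_of_nonneg (by omega)])
    omega

theorem aGen_zpow (d : ℕ) (i : Fin d) (k : ℤ) :
    aGen d i ^ k = SemidirectProduct.inl (ofAdd (Pi.single i k)) := by
  rw [aGen, ← map_zpow, ← ofAdd_zsmul]
  congr 1
  rw [← Pi.single_smul, smul_eq_mul, mul_one]

theorem inl_mem_A (d : ℕ) (w : Multiplicative (Fin d → ℤ)) :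
    SemidirectProduct.inl w ∈ A d := by
  have key : ∀ s : Finset (Fin d),
      SemidirectProduct.inl (ofAdd (∑ i ∈ s, Pi.single i (toAdd w i))) ∈ A d := by
    intro s
    induction s using Finset.cons_induction with
    | empty => simpa using Subgroup.one_mem (A d)
    | cons a s ha ih =>
        rw [Finset.sum_cons, ofAdd_add, map_mul]
        refine Subgroup.mul_mem _ ?_ ih
        rw [show SemidirectProduct.inl (ofAdd (Pi.single a (toAdd w a)))
            = aGen d a ^ (toAdd w a) from (aGen_zpow d a _).symm]
        exact Subgroup.zpow_mem _ (Subgroup.subset_closure (Set.mem_range_self a)) _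
  have hw : w = ofAdd (∑ i : Fin d, Pi.single i (toAdd w i)) := by
    rw [Finset.univ_sum_single]; rfl
  rw [hw]
  exact key Finset.univ

theorem mem_A_iff (d : ℕ) (g : Gamma d) : g ∈ A d ↔ g.right = 1 := by
  constructor
  · intro h
    have hle : A d ≤ (rightHom : Gamma d →* Multiplicative ℤ).ker := by
      rw [A, Subgroup.closure_le]
      rintro _ ⟨i, rfl⟩
      simp [aGen, MonoidHom.mem_ker]
    simpa [MonoidHom.mem_ker] using hle h
  · intro h
    have : g = SemidirectProduct.inl g.left := by
      ext <;> simp [h]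
    rw [this]
    exact inl_mem_A d g.left

theorem act_apply (d : ℕ) (m : Multiplicative ℤ) (v : Multiplicative (Fin d → ℤ)) :
    act d m v = (phiAut d ^ (-(toAdd m))) v := by
  rw [act, zpowersHom_apply, inv_zpow, ← zpow_neg]

theorem mem_centralizer_inl (d : ℕ) (v : Multiplicative (Fin d → ℤ)) (g : Gamma d) :
    g ∈ Subgroup.centralizer {SemidirectProduct.inl v} ↔ act d g.right v = v := by
  rw [Subgroup.mem_centralizer_singleton_iff]
  constructor
  · intro h
    have h2 := congrArg SemidirectProduct.left h
    rw [mul_left, mul_left, left_inl, right_inl, map_one, MulAut.one_apply] at h2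
    rw [mul_comm g.left] at h2
    exact mul_right_cancel h2
  · intro h
    ext
    · rw [mul_left, mul_left, left_inl, right_inl, map_one, MulAut.one_apply, h, mul_comm]
    · rw [mul_right, mul_right, right_inl, one_mul, mul_one]

theorem phiAut_fix_single (d : ℕ) (hd : 0 < d) (k : ℤ) :
    phiAut d (ofAdd (Pi.single (⟨d - 1, by omega⟩ : Fin d) k)) =
      ofAdd (Pi.single (⟨d - 1, by omega⟩ : Fin d) k) := by
  apply Multiplicative.toAdd.injective
  rw [phiAut_toAdd]
  simp only [toAdd_ofAdd]
  funext j
  rw [one_add_shift_apply]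
  by_cases hj : 1 ≤ (j : ℕ)
  · rw [dif_pos hj]
    have hne : (⟨(j : ℕ) - 1, lt_of_le_of_lt (Nat.sub_le _ _) j.isLt⟩ : Fin d)
        ≠ (⟨d - 1, by omega⟩ : Fin d) := by
      refine Fin.ne_of_val_ne ?_
      have := j.isLt
      simp only []
      omega
    rw [Pi.single_eq_of_ne hne, add_zero]
  · rw [dif_neg hj, add_zero]

/-- Proposition 4.1(2),(3): if `γ ∈ A_d ∖ ⟨a_d⟩` then `C(γ) = A_d`; if `γ ∈ ⟨a_d⟩` then
`C(γ) = Γ_d`. -/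
theorem centralizer_in_A (d : ℕ) (hd : 1 ≤ d) (γ : Gamma d) :
    (γ ∈ A d → γ ∉ Subgroup.zpowers (aGen d ⟨d - 1, by omega⟩) →
      Subgroup.centralizer {γ} = A d) ∧
    (γ ∈ Subgroup.zpowers (aGen d ⟨d - 1, by omega⟩) →
      Subgroup.centralizer {γ} = (⊤ : Subgroup (Gamma d))) := by
  constructor
  · intro hA hz
    have hright : γ.right = 1 := (mem_A_iff d γ).1 hA
    have hγ : γ = SemidirectProduct.inl γ.left := by ext <;> simp [hright]
    have hex : ∃ i : Fin d, (i : ℕ) < d - 1 ∧ toAdd γ.left i ≠ 0 := by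
      by_contra hc
      push_neg at hc
      apply hz
      rw [Subgroup.mem_zpowers_iff]
      refine ⟨toAdd γ.left ⟨d - 1, by omega⟩, ?_⟩
      rw [aGen_zpow, hγ]
      congr 1
      apply Multiplicative.toAdd.injective
      show Pi.single (⟨d - 1, by omega⟩ : Fin d) (toAdd γ.left ⟨d - 1, by omega⟩)
          = toAdd γ.left
      funext j
      by_cases hj : (j : ℕ) = d - 1
      · have : j = (⟨d - 1, by omega⟩ : Fin d) := Fin.ext hj
        rw [this, Pi.single_eq_same]
      · rw [Pi.single_eq_of_ne (Fin.ne_of_val_ne hj)]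
        exact (hc j (by have := j.isLt; omega)).symm
    rw [hγ]
    ext g
    rw [mem_centralizer_inl, mem_A_iff, act_apply]
    constructor
    · intro h
      have h0 := zpow_fixed_eq_zero d γ.left hex _ h
      apply Multiplicative.toAdd.injective
      simp only [toAdd_one]
      omega
    · intro h
      rw [h]
      simp
  · intro hz
    obtain ⟨k, hk⟩ := Subgroup.mem_zpowers_iff.1 hz
    rw [aGen_zpow] at hk
    ext g
    simp only [Subgroup.mem_top, iff_true]
    rw [← hk, mem_centralizer_inl, act_apply]
    exact mulaut_fix_zpow _ _ (phiAut_fix_single d hd k) _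


end ModelFiliform
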